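/- For all integers n, k, r ≥ 0, the polynomial ∂^n(a_1^r b_1^k) ∈ R equals the sum, over all set partitions {π_1,…,π_{r+k}} of {1,…,n+k+r} into r+k nonempty blocks such that i ∈ π_i for every 1 ≤ i ≤ r+k, of the monomial ∏_{i=1}^{r} a_{|π_i|} · ∏_{i=r+1}^{r+k} b_{|π_i|}. -/

import Mathlib

noncomputable section

/-- `R = ℚ[a_1,a_2,…;b_1,b_2,…]`, realized as the polynomial ring over `ℚ` with variables
`X (true, i) = a_i` and `X (false, i) = b_i`. -/
abbrev RR : Type := MvPolynomial (Bool × ℕ) ℚ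

/-- the variable `a_i` -/
def va (i : ℕ) : RR := MvPolynomial.X (true, i)
/-- the variable `b_i` -/
def vb (i : ℕ) : RR := MvPolynomial.X (false, i)

/-- the derivation `∂` of `R` with `∂ a_i = a_{i+1}` and `∂ b_i = b_{i+1}` -/
def del : RR → RR :=
  fun p => MvPolynomial.mkDerivation ℚ (fun s : Bool × ℕ => MvPolynomial.X (s.1, s.2 + 1)) p

/-- coefficientwise extension of a map on coefficients to `A[t]` (i.e. `∂` with `∂ t = 0`) -/
def polyLift {A : Type*} [Semiring A] (D : A → A) (p : Polynomial A) : Polynomial A :=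
  p.sum fun i c => Polynomial.C (D c) * Polynomial.X ^ i

/-- the map `E : R[t] → R[t]`, `E(p) = t·b_1·p + ∂(p)` -/
def EOp (p : Polynomial RR) : Polynomial RR :=
  Polynomial.C (vb 1) * Polynomial.X * p + polyLift del p

/-- the partial `r`-Bell polynomial `B^r_{n+r,k+r}`: the coefficient of `t^k` in `E^n(a_1^r)` -/
def rBell (n k r : ℕ) : RR := (EOp^[n] (Polynomial.C (va 1 ^ r))).coeff k

/-- Exponential of a formal multivariate power series (intended for series with zero
constant term): `exp(u) = ∑_{j≥0} u^j/j!`; for a series `u` of positive order only the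
terms with `j ≤ |d|` contribute to the coefficient of a monomial of total degree `|d|`. -/
def sexp {σ : Type*} {A : Type*} [Ring A] [Algebra ℚ A] (u : MvPowerSeries σ A) :
    MvPowerSeries σ A :=
  fun d => MvPowerSeries.coeff d
    (∑ j ∈ Finset.range (d.sum (fun _ m => m) + 1), (j.factorial : ℚ)⁻¹ • u ^ j)

/-! Write `w_i(c)` for `a_c` or `b_c` according to the label of block `i`, so that `∂ w_i(c) =
w_i(c + 1)`. By the Leibniz rule, `∂` sends the term `∏ᵢ w_i(|π_i|)` of a rooted partition `π`
to the sum over `i` of the same product with `|π_i|` raised by one, which is the term of the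
partition of one more point obtained by putting the new point into block `i`. Every rooted
partition of `N + 1` points arises exactly once this way (remove the last point), so `∂` carries
the sum over rooted partitions of `N` points to the sum over those of `N + 1` points. At `n = 0`
the roots exhaust the set and the only rooted partition is the one into singletons, whose term is
`a_1^r b_1^k`. -/

open Finset Function

theorem Derivation.map_prod_eq_sum_update {R A ι : Type*} [CommSemiring R] [CommSemiring A]
    [Algebra R A] [DecidableEq ι] (D : Derivation R A A) (s : Finset ι) (f : ι → A) :
    D (∏ i ∈ s, f i) = ∑ i ∈ s, ∏ j ∈ s, update f i (D (f i)) j := by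
  induction s using Finset.induction_on with
  | empty => simp
  | @insert a s ha ih =>
    have hs : ∀ i ∈ s, ∏ j ∈ insert a s, update f i (D (f i)) j
        = f a * ∏ j ∈ s, update f i (D (f i)) j := by
      intro i hi
      rw [prod_insert ha, update_of_ne (ne_of_mem_of_not_mem hi ha).symm]
    rw [prod_insert ha, D.leibniz, ih, sum_insert ha, sum_congr rfl hs, ← mul_sum, prod_insert ha,
      update_self, prod_update_of_notMem ha, smul_eq_mul, smul_eq_mul]
    ring

section RootedPartitions

variable {ι : Type*} [DecidableEq ι] {N : ℕ}

def addToBlock (π : ι → Finset (Fin N)) (i : ι) : ι → Finset (Fin (N + 1)) :=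
  fun j => if j = i then insert (Fin.last N) ((π j).map Fin.castSuccEmb)
    else (π j).map Fin.castSuccEmb

theorem castSucc_mem_addToBlock {π : ι → Finset (Fin N)} {i j : ι} {x : Fin N} :
    x.castSucc ∈ addToBlock π i j ↔ x ∈ π j := by
  unfold addToBlock
  split_ifs <;> simp [(Fin.castSucc_lt_last x).ne]

theorem last_mem_addToBlock {π : ι → Finset (Fin N)} {i j : ι} :
    Fin.last N ∈ addToBlock π i j ↔ j = i := by
  unfold addToBlock
  split_ifs <;> simp [*]

theorem card_addToBlock (π : ι → Finset (Fin N)) (i j : ι) :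
    (addToBlock π i j).card = (π j).card + if j = i then 1 else 0 := by
  unfold addToBlock
  split_ifs <;> simp [card_insert_of_notMem]

theorem addToBlock_injective :
    Injective fun p : (ι → Finset (Fin N)) × ι => addToBlock p.1 p.2 := by
  rintro ⟨π, i⟩ ⟨π', i'⟩ h
  have hπ (j : ι) : addToBlock π i j = addToBlock π' i' j := congrFun h j
  obtain rfl : i = i' := last_mem_addToBlock.mp ((hπ i).symm ▸ last_mem_addToBlock.mpr rfl)
  refine Prod.ext (funext fun j => ext fun x => ?_) rfl
  rw [← castSucc_mem_addToBlock (i := i), hπ j, castSucc_mem_addToBlock]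

variable [Fintype ι]

def rootedPartitions (ρ : ι → Fin N) : Finset (ι → Finset (Fin N)) :=
  univ.filter fun π => (∀ i, ρ i ∈ π i) ∧ (∀ i j, i ≠ j → Disjoint (π i) (π j)) ∧
    (∀ x, ∃ i, x ∈ π i)

theorem rootedPartitions_of_bijective {ρ : ι → Fin N} (hρ : Bijective ρ) :
    rootedPartitions ρ = {fun i => {ρ i}} := by
  ext π
  simp only [rootedPartitions, mem_filter, mem_univ, true_and, mem_singleton]
  constructor
  · rintro ⟨hroot, hdisj, -⟩
    funext i
    refine (singleton_subset_iff.mpr (hroot i)).antisymm' fun x hx => ?_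
    obtain ⟨j, rfl⟩ := hρ.2 x
    obtain rfl : i = j := by
      by_contra hij
      exact disjoint_left.mp (hdisj i j hij) hx (hroot j)
    exact mem_singleton_self _
  · rintro rfl
    refine ⟨fun i => mem_singleton_self _, fun i j hij => ?_, fun x => ?_⟩
    · exact disjoint_singleton.mpr (hρ.1.ne hij)
    · obtain ⟨i, rfl⟩ := hρ.2 x
      exact ⟨i, mem_singleton_self _⟩

theorem addToBlock_mem_rootedPartitions {ρ : ι → Fin N} {π : ι → Finset (Fin N)}
    (hπ : π ∈ rootedPartitions ρ) (i : ι) :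
    addToBlock π i ∈ rootedPartitions (Fin.castSucc ∘ ρ) := by
  simp only [rootedPartitions, mem_filter, mem_univ, true_and] at hπ ⊢
  obtain ⟨hroot, hdisj, hcover⟩ := hπ
  refine ⟨fun j => castSucc_mem_addToBlock.mpr (hroot j), fun j j' hjj' => ?_, fun x => ?_⟩
  · refine disjoint_left.mpr fun x hx hx' => ?_
    induction x using Fin.lastCases with
    | last => exact hjj' ((last_mem_addToBlock.mp hx).trans (last_mem_addToBlock.mp hx').symm)
    | cast y =>
      exact disjoint_left.mp (hdisj j j' hjj') (castSucc_mem_addToBlock.mp hx)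
        (castSucc_mem_addToBlock.mp hx')
  · induction x using Fin.lastCases with
    | last => exact ⟨i, last_mem_addToBlock.mpr rfl⟩
    | cast y => exact (hcover y).imp fun j => castSucc_mem_addToBlock.mpr

theorem exists_addToBlock_eq {ρ : ι → Fin N} {π' : ι → Finset (Fin (N + 1))}
    (hπ' : π' ∈ rootedPartitions (Fin.castSucc ∘ ρ)) :
    ∃ π ∈ rootedPartitions ρ, ∃ i, addToBlock π i = π' := by
  simp only [rootedPartitions, mem_filter, mem_univ, true_and] at hπ' ⊢
  obtain ⟨hroot, hdisj, hcover⟩ := hπ'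
  obtain ⟨i, hi⟩ := hcover (Fin.last N)
  let π j := (π' j).preimage Fin.castSucc (Fin.castSucc_injective N).injOn
  have mem_π {j x} : x ∈ π j ↔ x.castSucc ∈ π' j := mem_preimage
  refine ⟨π, ⟨fun j => mem_π.mpr (hroot j), fun j j' hjj' => ?_, fun x => ?_⟩, i, ?_⟩
  · exact disjoint_left.mpr fun x hx hx' =>
      disjoint_left.mp (hdisj j j' hjj') (mem_π.mp hx) (mem_π.mp hx')
  · exact (hcover x.castSucc).imp fun j => mem_π.mpr
  · refine funext fun j => ext fun x => ?_
    induction x using Fin.lastCases with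
    | last =>
      rw [last_mem_addToBlock]
      refine ⟨fun h => h ▸ hi, fun h => ?_⟩
      by_contra hji
      exact disjoint_left.mp (hdisj j i hji) h hi
    | cast y => rw [castSucc_mem_addToBlock, mem_π]

theorem image_addToBlock (ρ : ι → Fin N) :
    (rootedPartitions ρ ×ˢ univ).image (fun p => addToBlock p.1 p.2) =
      rootedPartitions (Fin.castSucc ∘ ρ) := by
  ext π'
  simp only [mem_image, mem_product, mem_univ, and_true, Prod.exists]
  constructor
  · rintro ⟨π, i, hπ, rfl⟩
    exact addToBlock_mem_rootedPartitions hπ i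
  · intro hπ'
    obtain ⟨π, hπ, i, rfl⟩ := exists_addToBlock_eq hπ'
    exact ⟨π, i, hπ, rfl⟩

theorem sum_rootedPartitions_castSucc {M : Type*} [AddCommMonoid M] (ρ : ι → Fin N)
    (F : (ι → Finset (Fin (N + 1))) → M) :
    ∑ π ∈ rootedPartitions (Fin.castSucc ∘ ρ), F π =
      ∑ π ∈ rootedPartitions ρ, ∑ i, F (addToBlock π i) := by
  rw [← image_addToBlock, sum_image addToBlock_injective.injOn, sum_product]

end RootedPartitions

section IterateDerivation

variable {R A ι : Type*} [CommSemiring R] [CommSemiring A] [Algebra R A] [Fintype ι]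
  [DecidableEq ι] (D : Derivation R A A) {w : ι → ℕ → A}

theorem Derivation.map_sum_rootedPartitions (hw : ∀ i c, D (w i c) = w i (c + 1)) {N : ℕ}
    (ρ : ι → Fin N) :
    D (∑ π ∈ rootedPartitions ρ, ∏ i, w i (π i).card) =
      ∑ π ∈ rootedPartitions (Fin.castSucc ∘ ρ), ∏ i, w i (π i).card := by
  rw [map_sum, sum_rootedPartitions_castSucc]
  refine sum_congr rfl fun π _ => ?_
  rw [D.map_prod_eq_sum_update]
  refine sum_congr rfl fun i _ => prod_congr rfl fun j _ => ?_
  rw [card_addToBlock, update_apply]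
  split_ifs with hji
  · rw [hji, hw]
  · rw [add_zero]

theorem Derivation.iterate_sum_rootedPartitions (hw : ∀ i c, D (w i c) = w i (c + 1)) {N : ℕ}
    (ρ : ι → Fin N) (n : ℕ) {N' : ℕ} (hle : N ≤ N') (hN' : N' = N + n) :
    D^[n] (∑ π ∈ rootedPartitions ρ, ∏ i, w i (π i).card) =
      ∑ π ∈ rootedPartitions (Fin.castLE hle ∘ ρ), ∏ i, w i (π i).card := by
  induction n generalizing N' with
  | zero =>
    subst hN'
    rfl
  | succ n ih =>
    subst hN'
    rw [iterate_succ_apply', ih (Nat.le_add_right N n) rfl, D.map_sum_rootedPartitions hw]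
    rfl

end IterateDerivation

def delDerivation : Derivation ℚ RR RR :=
  MvPolynomial.mkDerivation ℚ fun s : Bool × ℕ => MvPolynomial.X (s.1, s.2 + 1)

theorem coe_delDerivation : ⇑delDerivation = del := rfl

theorem delDerivation_va (i : ℕ) : delDerivation (va i) = va (i + 1) :=
  MvPolynomial.mkDerivation_X _ _ _

theorem delDerivation_vb (i : ℕ) : delDerivation (vb i) = vb (i + 1) :=
  MvPolynomial.mkDerivation_X _ _ _

theorem Fin.prod_univ_ite_val_lt {M : Type*} [CommMonoid M] (r k : ℕ) (a b : M) :
    ∏ i : Fin (r + k), (if (i : ℕ) < r then a else b) = a ^ r * b ^ k := by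
  simp [Fin.prod_univ_add]

/-- For all `n, k, r ≥ 0`, `∂^n(a_1^r b_1^k)` is the sum, over all set
partitions `{π_1,…,π_{r+k}}` of `{1,…,n+k+r}` into `r+k` nonempty blocks with `i ∈ π_i`
for `1 ≤ i ≤ r+k`, of `∏_{i=1}^r a_{|π_i|} · ∏_{i=r+1}^{r+k} b_{|π_i|}`.  (Such labeled
partitions are encoded as functions `π : Fin (r+k) → Finset (Fin (n+k+r))` whose values
are pairwise disjoint, cover everything, and satisfy `i ∈ π i`; nonemptiness follows.) -/
theorem stmt10 (n k r : ℕ) :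
    del^[n] (va 1 ^ r * vb 1 ^ k) =
      ∑ π ∈ Finset.univ.filter
          (fun π : Fin (r + k) → Finset (Fin (n + k + r)) =>
            (∀ i : Fin (r + k), Fin.castLE (by omega) i ∈ π i) ∧
            (∀ i j : Fin (r + k), i ≠ j → Disjoint (π i) (π j)) ∧
            (∀ x : Fin (n + k + r), ∃ i, x ∈ π i)),
        ∏ i : Fin (r + k), (if (i : ℕ) < r then va (π i).card else vb (π i).card) := by
  let w (i : Fin (r + k)) (c : ℕ) : RR := if (i : ℕ) < r then va c else vb c
  have hw (i c) : delDerivation (w i c) = w i (c + 1) := by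
    simp only [w]
    split_ifs
    · exact delDerivation_va c
    · exact delDerivation_vb c
  have h := delDerivation.iterate_sum_rootedPartitions hw id n (N' := n + k + r) (by omega)
    (by omega)
  rw [rootedPartitions_of_bijective bijective_id, sum_singleton, comp_id, rootedPartitions] at h
  simp only [w, card_singleton, Fin.prod_univ_ite_val_lt, coe_delDerivation] at h
  -- the two filters differ only in their `Decidable` instances
  convert h
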